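/- Let h ≥ 1, let X ⊆ B^h be nonempty, let G = Q_h(X), and let u ∈ V(G) have degree h in G. Then for every vertex v ∈ V(G) \ N[u] one has |N^u(v)| ≥ 2, i.e., every vertex v other than u and its neighbors has at least two neighbors z with d_G(u,z) = d_G(u,v) − 1. -/

import Mathlib

open SimpleGraph

/-- The hypercube `Q_h` on binary words of length `h`: two words are adjacent
iff their Hamming distance is `1`. -/
def Qcube (h : ℕ) : SimpleGraph (Fin h → Bool) where
  Adj u v := hammingDist u v = 1
  symm := ⟨fun u v huv => by show hammingDist v u = 1; rwa [hammingDist_comm]⟩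
  loopless := ⟨fun u hu => by simp only [hammingDist_self] at hu; exact absurd hu (by norm_num)⟩

/-- Vertex set of the daisy cube `Q_h(X)`: all words below some element of `X`. -/
def daisyVerts {h : ℕ} (X : Set (Fin h → Bool)) : Set (Fin h → Bool) :=
  {v | ∃ x ∈ X, v ≤ x}

/-- The daisy cube `Q_h(X)`, the subgraph of `Q_h` induced by `daisyVerts X`. -/
def daisyGraph {h : ℕ} (X : Set (Fin h → Bool)) : SimpleGraph (daisyVerts X) :=
  SimpleGraph.induce (daisyVerts X) (Qcube h)

/-- `\widehat X`: the set of maximal elements of the poset `(X, ≤)`. -/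
def maxSet {h : ℕ} (X : Set (Fin h → Bool)) : Set (Fin h → Bool) :=
  {x ∈ X | ∀ y ∈ X, x ≤ y → x = y}

/-- The all-zeros word `0^h`. -/
def zeroW (h : ℕ) : Fin h → Bool := fun _ => false

/-- Bitwise XOR of words. -/
def xorW {h : ℕ} (u v : Fin h → Bool) : Fin h → Bool := fun i => xor (u i) (v i)

/-- Bitwise AND of words. -/
def andW {h : ℕ} (u v : Fin h → Bool) : Fin h → Bool := fun i => u i && v i

/-- The weight `w(u)`: the number of ones of a word. -/
def weightW {h : ℕ} (u : Fin h → Bool) : ℕ :=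
  (Finset.univ.filter fun i => u i = true).card

/-- The interval `I_G(u,v)`: vertices lying on shortest `u,v`-paths. -/
def gInterval {V : Type*} (G : SimpleGraph V) (u v : V) : Set V :=
  {w | G.dist u w + G.dist w v = G.dist u v}

/-- `N^u(v)`: neighbors of `v` that are closer to `u` than `v` is. -/
def lowerNbrs {V : Type*} (G : SimpleGraph V) (u v : V) : Set V :=
  {z | G.Adj v z ∧ G.dist u z + 1 = G.dist u v}

/-- `α` is an isometric embedding of `G` into `Q_h`. -/
def IsIsomEmb {V : Type*} (G : SimpleGraph V) {h : ℕ} (α : V → Fin h → Bool) : Prop :=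
  ∀ a b, hammingDist (α a) (α b) = G.dist a b

/-- `α` is a proper embedding of `G` into `Q_h`: an isometric embedding such that
`G` is isomorphic to the daisy cube generated by the image of `α`. -/
def IsProperEmb {V : Type*} (G : SimpleGraph V) {h : ℕ} (α : V → Fin h → Bool) : Prop :=
  IsIsomEmb G α ∧ Nonempty (G ≃g daisyGraph (Set.range α))

/-- `v` is a minimal vertex of `G`: some proper embedding sends `v` to `0^h`. -/
def IsMinVertex {V : Type*} (G : SimpleGraph V) (h : ℕ) (v : V) : Prop :=
  ∃ α : V → Fin h → Bool, IsProperEmb G α ∧ α v = zeroW h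

/-- The labeling conditions of Proposition `cubes`/Lemma `partial`: `α v = 0^h`,
the neighbors of `v` get pairwise distinct weight-one labels, and every other
vertex gets the bitwise OR of the labels of its down-neighbors. -/
def goodLabeling {V : Type*} (G : SimpleGraph V) {h : ℕ} (v : V)
    (α : V → Fin h → Bool) : Prop :=
  α v = zeroW h ∧
  Set.InjOn α (G.neighborSet v) ∧
  (∀ z ∈ G.neighborSet v, weightW (α z) = 1) ∧
  (∀ u ∉ insert v (G.neighborSet v),
    ∀ i, α u i = true ↔ ∃ z ∈ lowerNbrs G v u, α z i = true)




section aux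
variable {h : ℕ} {X : Set (Fin h → Bool)}

lemma mem_daisy_of_le {a b : Fin h → Bool} (ha : a ∈ daisyVerts X) (hb : b ≤ a) :
    b ∈ daisyVerts X := by
  obtain ⟨x, hx, hax⟩ := ha
  exact ⟨x, hx, le_trans hb hax⟩

lemma hamming_mid {a b c : Fin h → Bool} (hc : ∀ k, c k = a k ∨ c k = b k) :
    hammingDist a c + hammingDist c b = hammingDist a b := by
  classical
  simp only [hammingDist, Finset.card_filter, ← Finset.sum_add_distrib]
  refine Finset.sum_congr rfl fun k _ => ?_
  rcases hc k with hk | hk <;> rw [hk] <;> cases a k <;> cases b k <;> simp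

lemma hd_update {v : Fin h → Bool} {i : Fin h} {c : Bool} (hc : c ≠ v i) :
    hammingDist v (Function.update v i c) = 1 := by
  classical
  have : (Finset.univ.filter fun k => v k ≠ Function.update v i c k) = {i} := by
    ext k
    by_cases hk : k = i <;> simp [Function.update_apply, hk, Ne.symm hc]
  simp [hammingDist, this]

lemma daisy_adj {a b : daisyVerts X} :
    (daisyGraph X).Adj a b ↔ hammingDist a.val b.val = 1 := Iff.rfl

lemma hd_le_walk_length {a b : daisyVerts X} (p : (daisyGraph X).Walk a b) :
    hammingDist a.val b.val ≤ p.length := by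
  induction p with
  | nil => simp
  | @cons x y z hadj p ih =>
    have h1 : hammingDist x.val y.val = 1 := hadj
    calc hammingDist x.val z.val
        ≤ hammingDist x.val y.val + hammingDist y.val z.val := hammingDist_triangle _ _ _
      _ ≤ 1 + p.length := by rw [h1]; omega
      _ = (SimpleGraph.Walk.cons hadj p).length := by simp [Nat.add_comm]

lemma desc_walk : ∀ (n : ℕ) (a b : daisyVerts X), b.val ≤ a.val →
    hammingDist a.val b.val = n → ∃ p : (daisyGraph X).Walk a b, p.length = n := by
  intro n
  induction n with
  | zero =>
    intro a b _ hd
    have : a = b := Subtype.ext (eq_of_hammingDist_eq_zero hd)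
    subst this
    exact ⟨SimpleGraph.Walk.nil, rfl⟩
  | succ n ih =>
    intro a b hle hd
    have hne : hammingDist a.val b.val ≠ 0 := by omega
    have : ∃ i, a.val i ≠ b.val i := by
      by_contra hcon
      push_neg at hcon
      exact hne (hammingDist_eq_zero.mpr (funext hcon))
    obtain ⟨i, hi⟩ := this
    set a' : Fin h → Bool := Function.update a.val i (b.val i) with ha'
    have hmid : ∀ k, a' k = a.val k ∨ a' k = b.val k := by
      intro k
      by_cases hk : k = i
      · subst hk; right; simp [ha']
      · left; simp [ha', Function.update_apply, hk]
    have h1 : hammingDist a.val a' = 1 := hd_update (Ne.symm hi)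
    have h2 : hammingDist a' b.val = n := by
      have := hamming_mid (a := a.val) (b := b.val) hmid
      omega
    have ha'le : a' ≤ a.val := by
      intro k
      by_cases hk : k = i
      · subst hk; simpa [ha'] using hle k
      · simp [ha', Function.update_apply, hk]
    have hba' : b.val ≤ a' := by
      intro k
      by_cases hk : k = i
      · subst hk; simp [ha']
      · simpa [ha', Function.update_apply, hk] using hle k
    have hD : a' ∈ daisyVerts X := mem_daisy_of_le a.2 ha'le
    obtain ⟨p, hp⟩ := ih ⟨a', hD⟩ b hba' h2
    exact ⟨SimpleGraph.Walk.cons (daisy_adj.mpr h1) p, by simp [hp]⟩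

lemma daisy_dist (a b : daisyVerts X) :
    (daisyGraph X).dist a b = hammingDist a.val b.val := by
  set m : Fin h → Bool := andW a.val b.val with hm
  have hmid : ∀ k, m k = a.val k ∨ m k = b.val k := by
    intro k; cases ha : a.val k <;> cases hb : b.val k <;> simp [hm, andW, ha, hb]
  have hma : m ≤ a.val := by
    intro k; cases ha : a.val k <;> cases hb : b.val k <;> simp [hm, andW, ha, hb]
  have hmb : m ≤ b.val := by
    intro k; cases ha : a.val k <;> cases hb : b.val k <;> simp [hm, andW, ha, hb]
  have hmD : m ∈ daisyVerts X := mem_daisy_of_le a.2 hma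
  obtain ⟨p, hp⟩ := desc_walk (hammingDist a.val m) a ⟨m, hmD⟩ hma rfl
  obtain ⟨q, hq⟩ := desc_walk (hammingDist b.val m) b ⟨m, hmD⟩ hmb rfl
  have hsum : hammingDist a.val m + hammingDist m b.val = hammingDist a.val b.val :=
    hamming_mid hmid
  refine Nat.le_antisymm ?_ ?_
  · have := SimpleGraph.dist_le (p.append q.reverse)
    simp only [SimpleGraph.Walk.length_append, SimpleGraph.Walk.length_reverse, hp, hq] at this
    rw [hammingDist_comm b.val m] at this
    omega
  · obtain ⟨r, hr⟩ := ((p.append q.reverse).reachable).exists_walk_length_eq_dist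
    rw [← hr]
    exact hd_le_walk_length r

lemma flips_mem (u : daisyVerts X) (hu : ((daisyGraph X).neighborSet u).ncard = h) :
    ∀ i, Function.update u.val i (!(u.val i)) ∈ daisyVerts X := by
  classical
  set e : Fin h → (Fin h → Bool) := fun i => Function.update u.val i (!(u.val i)) with he
  set A : Finset (Fin h) := Finset.univ.filter (fun i => e i ∈ daisyVerts X) with hA
  have himg : Subtype.val '' ((daisyGraph X).neighborSet u) = e '' (A : Set (Fin h)) := by
    ext w
    constructor
    · rintro ⟨z, hz, rfl⟩
      have hadj : hammingDist u.val z.val = 1 := hz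
      have : ∃ i, (Finset.univ.filter fun k => u.val k ≠ z.val k) = {i} :=
        Finset.card_eq_one.mp hadj
      obtain ⟨i, hi⟩ := this
      have hzi : z.val = e i := by
        funext k
        by_cases hk : k = i
        · subst hk
          have : u.val k ≠ z.val k := by
            have : k ∈ ({k} : Finset (Fin h)) := Finset.mem_singleton_self k
            rw [← hi] at this
            exact (Finset.mem_filter.mp this).2
          simp only [he, Function.update_self]
          cases hu : u.val k <;> cases hz' : z.val k <;> simp_all
        · have : k ∉ (Finset.univ.filter fun k => u.val k ≠ z.val k) := by
            rw [hi]; simp [hk]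
          simp only [Finset.mem_filter, Finset.mem_univ, true_and, not_not] at this
          simp [he, Function.update_apply, hk, ← this]
      refine ⟨i, ?_, hzi.symm⟩
      rw [Finset.mem_coe, hA, Finset.mem_filter]
      exact ⟨Finset.mem_univ i, hzi ▸ z.2⟩
    · rintro ⟨i, hiA, rfl⟩
      have hiD : e i ∈ daisyVerts X := by
        have := hiA
        simp only [Finset.mem_coe, hA, Finset.mem_filter] at this
        exact this.2
      refine ⟨⟨e i, hiD⟩, ?_, rfl⟩
      show hammingDist u.val (e i) = 1
      exact hd_update (by cases hu' : u.val i <;> simp [hu'])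
  have hinj : Function.Injective e := by
    intro i j hij
    by_contra hne
    have h1 : e i i = !(u.val i) := by simp [he]
    have h2 : e j i = u.val i := by simp [he, Function.update_apply, hne]
    have : (!(u.val i)) = u.val i := by rw [← h1, hij, h2]
    simp at this
  have hcard : (A : Set (Fin h)).ncard = h := by
    have h1 : (Subtype.val '' ((daisyGraph X).neighborSet u)).ncard =
        ((daisyGraph X).neighborSet u).ncard :=
      Set.ncard_image_of_injective _ Subtype.val_injective
    have h2 : (e '' (A : Set (Fin h))).ncard = (A : Set (Fin h)).ncard :=
      Set.ncard_image_of_injective _ hinj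
    rw [himg, h2] at h1
    omega
  have hAcard : A.card = h := by rw [← Set.ncard_coe_finset]; exact hcard
  have : A = Finset.univ := Finset.eq_univ_of_card A (by simp [hAcard])
  intro i
  have : i ∈ A := this ▸ Finset.mem_univ i
  simp only [hA, Finset.mem_filter] at this
  exact this.2

end aux

/-- If `u` is a vertex of degree `h` of the daisy cube `G = Q_h(X)`,
then every vertex `v ∈ V(G) \ N[u]` has at least two neighbors `z` with
`d_G(u,z) = d_G(u,v) - 1`. -/
theorem stmt_12 (h : ℕ) (hh : 1 ≤ h) (X : Set (Fin h → Bool)) (hX : X.Nonempty)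
    (u : daisyVerts X) (hu : ((daisyGraph X).neighborSet u).ncard = h) :
    ∀ v : daisyVerts X, v ∉ insert u ((daisyGraph X).neighborSet u) →
      2 ≤ (lowerNbrs (daisyGraph X) u v).ncard := by
  intro v hv
  have hflip := flips_mem u hu
  have hvne : v ≠ u := fun hvu => hv (by simp [hvu])
  have hnadj : ¬ (daisyGraph X).Adj u v := fun ha => hv (Set.mem_insert_iff.mpr (Or.inr ha))
  have hd0 : hammingDist u.val v.val ≠ 0 := fun h0 =>
    hvne (Subtype.ext (eq_of_hammingDist_eq_zero h0)).symm
  have hd1 : hammingDist u.val v.val ≠ 1 := fun h1 => hnadj (daisy_adj.mpr h1)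
  have hd2 : 2 ≤ hammingDist u.val v.val := by omega
  have key : ∀ (i : Fin h) (hiD : Function.update v.val i (u.val i) ∈ daisyVerts X),
      u.val i ≠ v.val i →
      (⟨Function.update v.val i (u.val i), hiD⟩ : daisyVerts X) ∈
        lowerNbrs (daisyGraph X) u v := by
    intro i hiD hne
    have h1 : hammingDist v.val (Function.update v.val i (u.val i)) = 1 := hd_update hne
    refine ⟨daisy_adj.mpr h1, ?_⟩
    rw [daisy_dist, daisy_dist]
    have hmid : ∀ k, Function.update v.val i (u.val i) k = u.val k ∨
        Function.update v.val i (u.val i) k = v.val k := by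
      intro k
      by_cases hk : k = i
      · subst hk; left; rw [Function.update_self]
      · right; rw [Function.update_apply, if_neg hk]
    have hsum := hamming_mid (a := u.val) (b := v.val) hmid
    have h1' : hammingDist (Function.update v.val i (u.val i)) v.val = 1 := by
      rw [hammingDist_comm]; exact h1
    show hammingDist u.val (Function.update v.val i (u.val i)) + 1 = hammingDist u.val v.val
    omega
  have final : ∀ i j, i ≠ j → u.val i ≠ v.val i → u.val j ≠ v.val j →
      Function.update v.val i (u.val i) ∈ daisyVerts X →
      Function.update v.val j (u.val j) ∈ daisyVerts X →
      2 ≤ (lowerNbrs (daisyGraph X) u v).ncard := by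
    intro i j hij hnei hnej hiD hjD
    have hzi := key i hiD hnei
    have hzj := key j hjD hnej
    have hzne : (⟨Function.update v.val i (u.val i), hiD⟩ : daisyVerts X) ≠
        ⟨Function.update v.val j (u.val j), hjD⟩ := by
      intro hEq
      rw [Subtype.mk_eq_mk] at hEq
      have hc := congrFun hEq i
      rw [Function.update_self, Function.update_apply, if_neg hij] at hc
      exact hnei hc
    calc (2 : ℕ) = ({⟨Function.update v.val i (u.val i), hiD⟩,
          ⟨Function.update v.val j (u.val j), hjD⟩} : Set (daisyVerts X)).ncard :=
          (Set.ncard_pair hzne).symm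
      _ ≤ (lowerNbrs (daisyGraph X) u v).ncard := by
          refine Set.ncard_le_ncard ?_ (Set.toFinite _)
          rintro z hz
          simp only [Set.mem_insert_iff, Set.mem_singleton_iff] at hz
          rcases hz with rfl | rfl
          · exact hzi
          · exact hzj
  set P : Finset (Fin h) :=
    Finset.univ.filter (fun i => u.val i = false ∧ v.val i = true) with hPdef
  have hPne : ∀ i ∈ P, u.val i ≠ v.val i := by
    intro i hi
    have := (Finset.mem_filter.mp hi).2
    rw [this.1, this.2]; simp
  by_cases hP : 2 ≤ P.card
  · obtain ⟨i, hi, j, hj, hij⟩ := Finset.one_lt_card.mp (show 1 < P.card by omega)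
    have hle : ∀ k ∈ P, Function.update v.val k (u.val k) ≤ v.val := by
      intro k hk m
      by_cases hm : m = k
      · subst hm
        rw [Function.update_self, (Finset.mem_filter.mp hk).2.1]
        exact Bool.false_le _
      · rw [Function.update_apply, if_neg hm]
    exact final i j hij (hPne i hi) (hPne j hj)
      (mem_daisy_of_le v.2 (hle i hi)) (mem_daisy_of_le v.2 (hle j hj))
  · have hw : ∃ w ∈ daisyVerts X, u.val ≤ w ∧ v.val ≤ w := by
      by_cases hP0 : P = ∅
      · refine ⟨u.val, u.2, le_refl _, fun k => ?_⟩
        rw [Bool.le_iff_imp]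
        intro hvk
        by_contra huk
        have hk : k ∈ P := Finset.mem_filter.mpr
          ⟨Finset.mem_univ _, Bool.not_eq_true _ ▸ huk, hvk⟩
        simp [hP0] at hk
      · obtain ⟨j, hj⟩ := Finset.nonempty_iff_ne_empty.mpr hP0
        have hjP := (Finset.mem_filter.mp hj).2
        refine ⟨Function.update u.val j true, ?_, fun k => ?_, fun k => ?_⟩
        · simpa [hjP.1] using hflip j
        · by_cases hk : k = j
          · subst hk; rw [Function.update_self]; exact Bool.le_true _
          · rw [Function.update_apply, if_neg hk]
        · by_cases hk : k = j
          · subst hk; rw [Function.update_self]; exact Bool.le_true _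
          · rw [Function.update_apply, if_neg hk, Bool.le_iff_imp]
            intro hvk
            by_contra huk
            have hkP : k ∈ P := Finset.mem_filter.mpr
              ⟨Finset.mem_univ _, Bool.not_eq_true _ ▸ huk, hvk⟩
            exact hP (Finset.one_lt_card.mpr ⟨k, hkP, j, hj, hk⟩)
    obtain ⟨w, hwD, huw, hvw⟩ := hw
    have hScard : (Finset.univ.filter (fun i => u.val i ≠ v.val i)).card =
        hammingDist u.val v.val := rfl
    obtain ⟨i, hi, j, hj, hij⟩ := Finset.one_lt_card.mp (by omega :
      1 < (Finset.univ.filter (fun i => u.val i ≠ v.val i)).card)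
    have hle : ∀ k ∈ Finset.univ.filter (fun i => u.val i ≠ v.val i),
        Function.update v.val k (u.val k) ≤ w := by
      intro k _ m
      by_cases hm : m = k
      · subst hm; rw [Function.update_self]; exact huw m
      · rw [Function.update_apply, if_neg hm]; exact hvw m
    exact final i j hij (Finset.mem_filter.mp hi).2 (Finset.mem_filter.mp hj).2
      (mem_daisy_of_le hwD (hle i hi)) (mem_daisy_of_le hwD (hle j hj))
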